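/- arXiv:2107.01926 — 2 statements merged into one kernel-verified Lean document; each statement's English description precedes it below -/
import Mathlib

section
/- Let k > 1 be an integer and p ≥ 4 an even integer. There exist real coefficients δ_{j₀,j₁,j₂} for (j₀,j₁,j₂) ∈ A^k and γ_{j₀,…,j_{p+1}} for (j₀,…,j_{p+1}) ∈ D^k such that, for every smooth 2π-periodic function u : ℝ → ℝ, ∫ (∂_x^k u)·(∂_x^{k+1}(u^{p+1})) = Σ_{(j₀,j₁,j₂)∈A^k} δ_{j₀,j₁,j₂} ∫ I_{j₀+1,j₁+1,j₂}(u) + Σ_{(j₀,…,j_{p+1})∈D^k} γ_{j₀,…,j_{p+1}} ∫ J_{j₀,…,j_{p+1}}(u). -/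
open Real MeasureTheory

/-- The integral over one period `[0, 2π]`. -/
noncomputable def torusInt (f : ℝ → ℝ) : ℝ := ∫ x in (0:ℝ)..(2 * Real.pi), f x

/-- A smooth `2π`-periodic function on the line (i.e. a smooth function on the torus). -/
def IsSmoothPeriodic (u : ℝ → ℝ) : Prop :=
  ContDiff ℝ (⊤:ℕ∞) u ∧ ∀ x, u (x + 2 * Real.pi) = u x

/-- The density `I_{j₀,j₁,j₂}(u) = u^{p−2} (∂ₓ^{j₀}u)² (∂ₓ^{j₁}u) (∂ₓ^{j₂}u)`. -/
noncomputable def Idens (p j₀ j₁ j₂ : ℕ) (u : ℝ → ℝ) (x : ℝ) : ℝ :=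
  u x ^ (p - 2) * iteratedDeriv j₀ u x ^ 2 * iteratedDeriv j₁ u x * iteratedDeriv j₂ u x

/-- The density `J_{i₀,…,i_m}(u) = ∏ₗ ∂ₓ^{iₗ} u`. -/
noncomputable def Jdens {m : ℕ} (j : Fin m → ℕ) (u : ℝ → ℝ) (x : ℝ) : ℝ :=
  ∏ l, iteratedDeriv (j l) u x

/-- The index set `A^k`. -/
def Aset (k : ℕ) : Finset (ℕ × ℕ × ℕ) :=
  (Finset.range k ×ˢ Finset.range k ×ˢ Finset.range k).filter
    (fun j => j.2.2 ≤ j.2.1 ∧ j.2.1 ≤ j.1 ∧ 2 * j.1 + j.2.1 + j.2.2 = 2 * k - 2)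

/-- The index set `D^k` (tuples of length `p+2`). -/
def Dset (p k : ℕ) (hp : 4 ≤ p) : Finset (Fin (p + 2) → ℕ) :=
  (Fintype.piFinset fun _ => Finset.range (2 * k + 2)).filter
    (fun j => (∀ l l' : Fin (p + 2), l ≤ l' → j l' ≤ j l) ∧
      (∑ l, j l) = 2 * k + 1 ∧ 1 ≤ j ⟨4, by omega⟩)

namespace QE

/-! ### Basic infrastructure -/

lemma ISP.iter {u : ℝ → ℝ} (hu : IsSmoothPeriodic u) (n : ℕ) :
    IsSmoothPeriodic (iteratedDeriv n u) := by
  induction n with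
  | zero => simpa [iteratedDeriv_zero] using hu
  | succ n ih =>
    rw [iteratedDeriv_succ]
    constructor
    · exact (contDiff_infty_iff_deriv.mp (by exact_mod_cast ih.1)).2
    · intro x
      have : (fun y => iteratedDeriv n u (y + 2 * Real.pi)) = iteratedDeriv n u := by
        funext y; exact ih.2 y
      rw [← deriv_comp_add_const (iteratedDeriv n u) (2 * Real.pi) x, this]

lemma hasDerivAt_iter {u : ℝ → ℝ} (hu : IsSmoothPeriodic u) (n : ℕ) (x : ℝ) :
    HasDerivAt (iteratedDeriv n u) (iteratedDeriv (n+1) u x) x := by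
  rw [iteratedDeriv_succ]
  exact (((ISP.iter hu n).1.differentiable (by simp)) x).hasDerivAt

lemma torusInt_congr {f g : ℝ → ℝ} (h : ∀ x, f x = g x) : torusInt f = torusInt g := by
  unfold torusInt; congr 1; funext x; exact h x

lemma torusInt_zero : torusInt (fun _ => (0:ℝ)) = 0 := by simp [torusInt]

lemma torusInt_add {f g : ℝ → ℝ} (hf : Continuous f) (hg : Continuous g) :
    torusInt (fun x => f x + g x) = torusInt f + torusInt g :=
  intervalIntegral.integral_add (hf.intervalIntegrable _ _) (hg.intervalIntegrable _ _)

lemma torusInt_add3 {f g h : ℝ → ℝ} (hf : Continuous f) (hg : Continuous g) (hh : Continuous h) :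
    torusInt (fun x => f x + g x + h x) = torusInt f + torusInt g + torusInt h := by
  rw [torusInt_add (f := fun x => f x + g x) (g := h) (hf.add hg) hh, torusInt_add hf hg]

lemma torusInt_const_mul (c : ℝ) (f : ℝ → ℝ) :
    torusInt (fun x => c * f x) = c * torusInt f := by
  simpa [torusInt] using intervalIntegral.integral_const_mul c f

lemma ibp {F F' G G' : ℝ → ℝ} (hF : ∀ x, HasDerivAt F (F' x) x) (hG : ∀ x, HasDerivAt G (G' x) x)
    (hFc : Continuous F) (hGc : Continuous G) (hF'c : Continuous F') (hG'c : Continuous G')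
    (hFp : ∀ x, F (x + 2 * Real.pi) = F x) (hGp : ∀ x, G (x + 2 * Real.pi) = G x) :
    torusInt (fun x => F' x * G x) = - torusInt (fun x => F x * G' x) := by
  have hfg : ∀ x ∈ Set.uIcc (0:ℝ) (2 * Real.pi), HasDerivAt (fun y => F y * G y)
      (F' x * G x + F x * G' x) x := fun x _ => (hF x).mul (hG x)
  have hint : IntervalIntegrable (fun x => F' x * G x + F x * G' x) volume 0 (2 * Real.pi) :=
    ((hF'c.mul hGc).add (hFc.mul hG'c)).intervalIntegrable _ _
  have h0 : torusInt (fun x => F' x * G x + F x * G' x) = 0 := by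
    unfold torusInt
    rw [intervalIntegral.integral_eq_sub_of_hasDerivAt hfg hint]
    have h1 : F (2*Real.pi) = F 0 := by simpa using hFp 0
    have h2 : G (2*Real.pi) = G 0 := by simpa using hGp 0
    rw [h1, h2]; ring
  have hsplit := torusInt_add (f := fun x => F' x * G x) (g := fun x => F x * G' x)
    (hF'c.mul hGc) (hFc.mul hG'c)
  have : torusInt (fun x => F' x * G x) + torusInt (fun x => F x * G' x) = 0 := by
    rw [← hsplit]; exact h0
  linarith

/-- The master integration-by-parts identity. -/
lemma key {u : ℝ → ℝ} (hu : IsSmoothPeriodic u) (e s t : ℕ)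
    (R R' : ℝ → ℝ) (hRd : ∀ x, HasDerivAt R (R' x) x)
    (hRc : Continuous R) (hR'c : Continuous R')
    (hRp : ∀ x, R (x + 2 * Real.pi) = R x) :
    torusInt (fun x => u x ^ e * (iteratedDeriv (s+1) u x * iteratedDeriv s u x ^ t * R x)) =
      -(1/(t+1)) * ((e : ℝ) * torusInt (fun x => u x ^ (e-1) *
            (iteratedDeriv 1 u x * iteratedDeriv s u x ^ (t+1) * R x))
        + torusInt (fun x => u x ^ e * (iteratedDeriv s u x ^ (t+1) * R' x))) := by
  have hic : ∀ n, Continuous (iteratedDeriv n u) := fun n => (ISP.iter hu n).1.continuous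
  have hip : ∀ n x, iteratedDeriv n u (x + 2*Real.pi) = iteratedDeriv n u x :=
    fun n => (ISP.iter hu n).2
  set F : ℝ → ℝ := fun x => iteratedDeriv s u x ^ (t+1) with hF
  set G : ℝ → ℝ := fun x => u x ^ e * R x with hG
  set F' : ℝ → ℝ := fun x => (t+1 : ℝ) * iteratedDeriv s u x ^ t * iteratedDeriv (s+1) u x
    with hF'
  set G' : ℝ → ℝ := fun x => (e:ℝ) * u x ^ (e-1) * iteratedDeriv 1 u x * R x + u x ^ e * R' x
    with hG'
  have hFd : ∀ x, HasDerivAt F (F' x) x := fun x => by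
    simpa using (hasDerivAt_iter hu s x).fun_pow (t+1)
  have hGd : ∀ x, HasDerivAt G (G' x) x := fun x => by
    have h0 := (hasDerivAt_iter hu 0 x)
    rw [iteratedDeriv_zero] at h0
    exact (h0.pow e).mul (hRd x)
  have hibp := ibp hFd hGd ((hic s).pow _) ((hu.1.continuous.pow e).mul hRc)
    ((continuous_const.mul ((hic s).pow t)).mul (hic (s+1)))
    ((((continuous_const.mul ((hu.1.continuous).pow (e-1))).mul (hic 1)).mul hRc).add
      ((hu.1.continuous.pow e).mul hR'c))
    (fun x => by simp only [hF, hip s x]) (fun x => by simp only [hG, hu.2 x, hRp x])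
  have ht1 : ((t:ℝ)+1) ≠ 0 := by positivity
  have step1 : torusInt
      (fun x => u x ^ e * (iteratedDeriv (s+1) u x * iteratedDeriv s u x ^ t * R x))
      = (1/(t+1)) * torusInt (fun x => F' x * G x) := by
    rw [← torusInt_const_mul]
    apply torusInt_congr
    intro x
    simp only [hF', hG]
    field_simp
  have step3 : torusInt (fun x => F x * G' x) =
      (e : ℝ) * torusInt (fun x => u x ^ (e-1) *
            (iteratedDeriv 1 u x * iteratedDeriv s u x ^ (t+1) * R x))
        + torusInt (fun x => u x ^ e * (iteratedDeriv s u x ^ (t+1) * R' x)) := by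
    have hsplit : torusInt (fun x => F x * G' x) =
        torusInt (fun x => (e:ℝ) * (u x ^ (e-1) *
            (iteratedDeriv 1 u x * iteratedDeriv s u x ^ (t+1) * R x)))
          + torusInt (fun x => u x ^ e * (iteratedDeriv s u x ^ (t+1) * R' x)) := by
      rw [← torusInt_add]
      · apply torusInt_congr
        intro x
        simp only [hF, hG']
        ring
      · exact continuous_const.mul (((hu.1.continuous).pow (e-1)).mul
          ((((hic 1)).mul ((hic s).pow (t+1))).mul hRc))
      · exact ((hu.1.continuous.pow e)).mul (((hic s).pow (t+1)).mul hR'c)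
    rw [hsplit, torusInt_const_mul]
  rw [step1, hibp, step3]
  ring

/-! ### Monomial functionals -/

noncomputable def T1 (e a : ℕ) : (ℝ → ℝ) → ℝ :=
  fun u => torusInt (fun x => u x ^ e * iteratedDeriv a u x)
noncomputable def T2 (e a b : ℕ) : (ℝ → ℝ) → ℝ :=
  fun u => torusInt (fun x => u x ^ e * (iteratedDeriv a u x * iteratedDeriv b u x))
noncomputable def T3 (e a b c : ℕ) : (ℝ → ℝ) → ℝ :=
  fun u => torusInt (fun x => u x ^ e *
    (iteratedDeriv a u x * (iteratedDeriv b u x * iteratedDeriv c u x)))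
noncomputable def T4 (e a b c d : ℕ) : (ℝ → ℝ) → ℝ :=
  fun u => torusInt (fun x => u x ^ e *
    (iteratedDeriv a u x * (iteratedDeriv b u x * (iteratedDeriv c u x * iteratedDeriv d u x))))
noncomputable def T5 (e a b c d g : ℕ) : (ℝ → ℝ) → ℝ :=
  fun u => torusInt (fun x => u x ^ e *
    (iteratedDeriv a u x * (iteratedDeriv b u x * (iteratedDeriv c u x *
      (iteratedDeriv d u x * iteratedDeriv g u x)))))

/-! ### The Good predicate -/

def Good (k p : ℕ) (hp : 4 ≤ p) (Φ : (ℝ → ℝ) → ℝ) : Prop :=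
  ∃ (δ : ℕ × ℕ × ℕ → ℝ) (γ : (Fin (p + 2) → ℕ) → ℝ),
    ∀ u : ℝ → ℝ, IsSmoothPeriodic u → Φ u =
      (∑ j ∈ Aset k, δ j * torusInt (Idens p (j.1 + 1) (j.2.1 + 1) j.2.2 u)) +
        ∑ j ∈ Dset p k hp, γ j * torusInt (Jdens j u)

variable {k p : ℕ} {hp : 4 ≤ p}

lemma Good.congr {Φ Ψ : (ℝ → ℝ) → ℝ} (h : Good k p hp Φ)
    (he : ∀ u, IsSmoothPeriodic u → Ψ u = Φ u) : Good k p hp Ψ := by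
  obtain ⟨δ, γ, H⟩ := h
  exact ⟨δ, γ, fun u hu => (he u hu).trans (H u hu)⟩

lemma Good.add {Φ Ψ : (ℝ → ℝ) → ℝ} (h1 : Good k p hp Φ) (h2 : Good k p hp Ψ) :
    Good k p hp (fun u => Φ u + Ψ u) := by
  obtain ⟨δ1, γ1, H1⟩ := h1
  obtain ⟨δ2, γ2, H2⟩ := h2
  refine ⟨δ1 + δ2, γ1 + γ2, fun u hu => ?_⟩
  dsimp only
  rw [H1 u hu, H2 u hu]
  simp only [Pi.add_apply, add_mul, Finset.sum_add_distrib]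
  ring

lemma Good.smul (c : ℝ) {Φ : (ℝ → ℝ) → ℝ} (h : Good k p hp Φ) :
    Good k p hp (fun u => c * Φ u) := by
  obtain ⟨δ, γ, H⟩ := h
  refine ⟨c • δ, c • γ, fun u hu => ?_⟩
  dsimp only
  rw [H u hu]
  simp only [Pi.smul_apply, smul_eq_mul, mul_add, Finset.mul_sum, mul_assoc]

lemma Good.comb2 {Φ S1 S2 : (ℝ → ℝ) → ℝ} (c1 c2 : ℝ) (h1 : Good k p hp S1)
    (h2 : Good k p hp S2)
    (h : ∀ u, IsSmoothPeriodic u → Φ u = c1 * S1 u + c2 * S2 u) : Good k p hp Φ :=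
  ((h1.smul c1).add (h2.smul c2)).congr h

lemma Good.comb3 {Φ S1 S2 S3 : (ℝ → ℝ) → ℝ} (c1 c2 c3 : ℝ) (h1 : Good k p hp S1)
    (h2 : Good k p hp S2) (h3 : Good k p hp S3)
    (h : ∀ u, IsSmoothPeriodic u → Φ u = c1 * S1 u + c2 * S2 u + c3 * S3 u) : Good k p hp Φ :=
  (((h1.smul c1).add (h2.smul c2)).add (h3.smul c3)).congr h

lemma Good.comb4 {Φ S1 S2 S3 S4 : (ℝ → ℝ) → ℝ} (c1 c2 c3 c4 : ℝ) (h1 : Good k p hp S1)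
    (h2 : Good k p hp S2) (h3 : Good k p hp S3) (h4 : Good k p hp S4)
    (h : ∀ u, IsSmoothPeriodic u → Φ u = c1 * S1 u + c2 * S2 u + c3 * S3 u + c4 * S4 u) :
    Good k p hp Φ :=
  ((((h1.smul c1).add (h2.smul c2)).add (h3.smul c3)).add (h4.smul c4)).congr h

lemma sum_indicator {α : Type*} [DecidableEq α] (s : Finset α) (b : α) (hb : b ∈ s)
    (X : α → ℝ) : (∑ j ∈ s, (if j = b then (1:ℝ) else 0) * X j) = X b := by
  have h0 : ∀ j ∈ s, (if j = b then (1:ℝ) else 0) * X j = if j = b then X j else 0 := by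
    intro j _; split_ifs with h <;> simp [h]
  rw [Finset.sum_congr rfl h0, Finset.sum_ite_eq' s b X, if_pos hb]

/-! ### Terminal cases -/

lemma goodI4 (hk : 1 < k) (hp : 4 ≤ p) {m n q : ℕ} (hn : 1 ≤ n) (hnm : n ≤ m) (hq : q < n)
    (hsum : 2*m + n + q = 2*k+1) : Good k p hp (T4 (p-2) m m n q) := by
  have hmem : (m-1, n-1, q) ∈ Aset k := by
    simp only [Aset, Finset.mem_filter, Finset.mem_product, Finset.mem_range]
    omega
  refine ⟨fun j => if j = (m-1, n-1, q) then 1 else 0, 0, fun u hu => ?_⟩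
  rw [sum_indicator _ _ hmem]
  simp only [Pi.zero_apply, zero_mul, Finset.sum_const_zero, add_zero]
  have h1 : m - 1 + 1 = m := by omega
  have h2 : n - 1 + 1 = n := by omega
  rw [h1, h2]
  exact torusInt_congr (fun x => by unfold Idens; ring)

lemma goodI3 (hk : 1 < k) (hp : 4 ≤ p) {m n : ℕ} (hn : 1 ≤ n) (hnm : n ≤ m)
    (hsum : 2*m + n = 2*k+1) : Good k p hp (T3 (p-1) m m n) := by
  have hmem : (m-1, n-1, 0) ∈ Aset k := by
    simp only [Aset, Finset.mem_filter, Finset.mem_product, Finset.mem_range]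
    omega
  refine ⟨fun j => if j = (m-1, n-1, 0) then 1 else 0, 0, fun u hu => ?_⟩
  rw [sum_indicator _ _ hmem]
  simp only [Pi.zero_apply, zero_mul, Finset.sum_const_zero, add_zero]
  have h1 : m - 1 + 1 = m := by omega
  have h2 : n - 1 + 1 = n := by omega
  rw [h1, h2]
  refine torusInt_congr (fun x => ?_)
  unfold Idens
  rw [iteratedDeriv_zero]
  have h3 : p - 1 = (p-2) + 1 := by omega
  rw [h3, pow_succ]
  ring

lemma goodJ (hk : 1 < k) (hp : 4 ≤ p) {a b c d g : ℕ} (hg : 1 ≤ g) (hgd : g ≤ d) (hdc : d ≤ c)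
    (hcb : c ≤ b) (hba : b ≤ a) (hsum : a + b + c + d + g = 2*k+1) :
    Good k p hp (T5 (p-3) a b c d g) := by
  set w : ℕ → ℕ := fun i => if i = 0 then a else if i = 1 then b else if i = 2 then c
    else if i = 3 then d else if i = 4 then g else 0 with hw
  set jv : Fin (p+2) → ℕ := fun l => w l.val with hjv
  have hwmono : ∀ i i' : ℕ, i ≤ i' → w i' ≤ w i := by
    intro i i' h; simp only [hw]; split_ifs <;> omega
  have hwa : ∀ i, w i ≤ a := by
    intro i; simp only [hw]; split_ifs <;> omega
  have hsplit : p + 2 = 5 + (p - 3) := by omega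
  have hw5 : ∀ i : ℕ, w (5 + i) = 0 := by
    intro i; simp only [hw]; split_ifs <;> omega
  have hjsum : (∑ l, jv l) = 2*k+1 := by
    rw [hjv]
    rw [Fin.sum_univ_eq_sum_range (fun i => w i) (p+2)]
    rw [hsplit, Finset.sum_range_add]
    have : ∀ i ∈ Finset.range (p-3), w (5 + i) = 0 := fun i _ => hw5 i
    rw [Finset.sum_congr rfl this, Finset.sum_const, smul_zero, add_zero]
    simp only [Finset.sum_range_succ, Finset.sum_range_zero, hw]
    norm_num
    omega
  have hmem : jv ∈ Dset p k hp := by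
    simp only [Dset, Finset.mem_filter, Fintype.mem_piFinset, Finset.mem_range]
    refine ⟨fun l => ?_, fun l l' hll' => hwmono _ _ hll', hjsum, ?_⟩
    · simp only [hjv]
      have := hwa (l.val)
      omega
    · show 1 ≤ w 4
      simp only [hw]
      norm_num
      omega
  have heval : ∀ u : ℝ → ℝ, ∀ x : ℝ, Jdens jv u x =
      iteratedDeriv a u x * (iteratedDeriv b u x * (iteratedDeriv c u x *
        (iteratedDeriv d u x * (iteratedDeriv g u x * u x ^ (p-3))))) := by
    intro u x
    unfold Jdens
    rw [hjv]
    rw [Fin.prod_univ_eq_prod_range (fun i => iteratedDeriv (w i) u x) (p+2)]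
    rw [hsplit, Finset.prod_range_add]
    have h2 : ∀ i ∈ Finset.range (p-3), iteratedDeriv (w (5 + i)) u x = u x := by
      intro i _; rw [hw5 i, iteratedDeriv_zero]
    rw [Finset.prod_congr rfl h2, Finset.prod_const, Finset.card_range]
    simp only [Finset.prod_range_succ, Finset.prod_range_zero, hw]
    norm_num
    ring
  refine ⟨0, fun j => if j = jv then 1 else 0, fun u hu => ?_⟩
  rw [sum_indicator _ _ hmem]
  simp only [Pi.zero_apply, zero_mul, Finset.sum_const_zero, zero_add]
  exact torusInt_congr (fun x => by rw [heval u x]; ring)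

/-! ### Reduction identities (integration by parts) -/

section identities

variable {u : ℝ → ℝ}

lemma idA (hu : IsSmoothPeriodic u) (e s : ℕ) :
    T1 e (s+1) u = -((e:ℝ) * T2 (e-1) s 1 u) := by
  have hkey := key hu e s 0 (fun _ => (1:ℝ)) (fun _ => (0:ℝ))
    (fun x => hasDerivAt_const x 1) continuous_const continuous_const (fun _ => rfl)
  have h1 : T1 e (s+1) u = torusInt (fun x => u x ^ e *
      (iteratedDeriv (s+1) u x * iteratedDeriv s u x ^ 0 * 1)) :=
    torusInt_congr fun x => by ring
  have hA : torusInt (fun x => u x ^ (e-1) *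
      (iteratedDeriv 1 u x * iteratedDeriv s u x ^ (0+1) * 1)) = T2 (e-1) s 1 u :=
    torusInt_congr fun x => by ring
  have hB : torusInt (fun x => u x ^ e * (iteratedDeriv s u x ^ (0+1) * 0)) = 0 := by
    rw [show (fun x => u x ^ e * (iteratedDeriv s u x ^ (0+1) * 0)) = (fun _ => (0:ℝ)) from
      funext fun x => by ring]
    exact torusInt_zero
  rw [h1, hkey, hA, hB]
  ring

lemma idB (hu : IsSmoothPeriodic u) (e s : ℕ) :
    T2 e (s+1) s u = -((e:ℝ)/2 * T3 (e-1) s s 1 u) := by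
  have hkey := key hu e s 1 (fun _ => (1:ℝ)) (fun _ => (0:ℝ))
    (fun x => hasDerivAt_const x 1) continuous_const continuous_const (fun _ => rfl)
  have h1 : T2 e (s+1) s u = torusInt (fun x => u x ^ e *
      (iteratedDeriv (s+1) u x * iteratedDeriv s u x ^ 1 * 1)) :=
    torusInt_congr fun x => by ring
  have hA : torusInt (fun x => u x ^ (e-1) *
      (iteratedDeriv 1 u x * iteratedDeriv s u x ^ (1+1) * 1)) = T3 (e-1) s s 1 u :=
    torusInt_congr fun x => by ring
  have hB : torusInt (fun x => u x ^ e * (iteratedDeriv s u x ^ (1+1) * 0)) = 0 := by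
    rw [show (fun x => u x ^ e * (iteratedDeriv s u x ^ (1+1) * 0)) = (fun _ => (0:ℝ)) from
      funext fun x => by ring]
    exact torusInt_zero
  rw [h1, hkey, hA, hB]
  ring

lemma idC (hu : IsSmoothPeriodic u) (e s r : ℕ) :
    T2 e (s+1) r u = -((e:ℝ) * T3 (e-1) s r 1 u) - T2 e s (r+1) u := by
  have hic : ∀ n, Continuous (iteratedDeriv n u) := fun n => (ISP.iter hu n).1.continuous
  have hkey := key hu e s 0 (iteratedDeriv r u) (iteratedDeriv (r+1) u)
    (fun x => hasDerivAt_iter hu r x) (hic r) (hic (r+1)) (fun x => (ISP.iter hu r).2 x)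
  have h1 : T2 e (s+1) r u = torusInt (fun x => u x ^ e *
      (iteratedDeriv (s+1) u x * iteratedDeriv s u x ^ 0 * iteratedDeriv r u x)) :=
    torusInt_congr fun x => by ring
  have hA : torusInt (fun x => u x ^ (e-1) *
      (iteratedDeriv 1 u x * iteratedDeriv s u x ^ (0+1) * iteratedDeriv r u x)) =
      T3 (e-1) s r 1 u :=
    torusInt_congr fun x => by ring
  have hB : torusInt (fun x => u x ^ e *
      (iteratedDeriv s u x ^ (0+1) * iteratedDeriv (r+1) u x)) = T2 e s (r+1) u :=
    torusInt_congr fun x => by ring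
  rw [h1, hkey, hA, hB]
  ring

lemma idD (hu : IsSmoothPeriodic u) (e s r : ℕ) :
    T3 e (s+1) s r u = -((e:ℝ)/2 * T4 (e-1) s s r 1 u) - (1/2) * T3 e s s (r+1) u := by
  have hic : ∀ n, Continuous (iteratedDeriv n u) := fun n => (ISP.iter hu n).1.continuous
  have hkey := key hu e s 1 (iteratedDeriv r u) (iteratedDeriv (r+1) u)
    (fun x => hasDerivAt_iter hu r x) (hic r) (hic (r+1)) (fun x => (ISP.iter hu r).2 x)
  have h1 : T3 e (s+1) s r u = torusInt (fun x => u x ^ e *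
      (iteratedDeriv (s+1) u x * iteratedDeriv s u x ^ 1 * iteratedDeriv r u x)) :=
    torusInt_congr fun x => by ring
  have hA : torusInt (fun x => u x ^ (e-1) *
      (iteratedDeriv 1 u x * iteratedDeriv s u x ^ (1+1) * iteratedDeriv r u x)) =
      T4 (e-1) s s r 1 u :=
    torusInt_congr fun x => by ring
  have hB : torusInt (fun x => u x ^ e *
      (iteratedDeriv s u x ^ (1+1) * iteratedDeriv (r+1) u x)) = T3 e s s (r+1) u :=
    torusInt_congr fun x => by ring
  rw [h1, hkey, hA, hB]
  ring

lemma idE (hu : IsSmoothPeriodic u) (e s : ℕ) :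
    T3 e (s+1) s s u = -((e:ℝ)/3 * T4 (e-1) s s s 1 u) := by
  have hkey := key hu e s 2 (fun _ => (1:ℝ)) (fun _ => (0:ℝ))
    (fun x => hasDerivAt_const x 1) continuous_const continuous_const (fun _ => rfl)
  have h1 : T3 e (s+1) s s u = torusInt (fun x => u x ^ e *
      (iteratedDeriv (s+1) u x * iteratedDeriv s u x ^ 2 * 1)) :=
    torusInt_congr fun x => by ring
  have hA : torusInt (fun x => u x ^ (e-1) *
      (iteratedDeriv 1 u x * iteratedDeriv s u x ^ (2+1) * 1)) = T4 (e-1) s s s 1 u :=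
    torusInt_congr fun x => by ring
  have hB : torusInt (fun x => u x ^ e * (iteratedDeriv s u x ^ (2+1) * 0)) = 0 := by
    rw [show (fun x => u x ^ e * (iteratedDeriv s u x ^ (2+1) * 0)) = (fun _ => (0:ℝ)) from
      funext fun x => by ring]
    exact torusInt_zero
  rw [h1, hkey, hA, hB]
  ring

lemma idF (hu : IsSmoothPeriodic u) (e s r r' : ℕ) :
    T3 e (s+1) r r' u = -((e:ℝ) * T4 (e-1) s r r' 1 u) - T3 e s (r+1) r' u
      - T3 e s r (r'+1) u := by
  have hic : ∀ n, Continuous (iteratedDeriv n u) := fun n => (ISP.iter hu n).1.continuous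
  have hC : Continuous u := hu.1.continuous
  have hkey := key hu e s 0
    (fun x => iteratedDeriv r u x * iteratedDeriv r' u x)
    (fun x => iteratedDeriv (r+1) u x * iteratedDeriv r' u x
      + iteratedDeriv r u x * iteratedDeriv (r'+1) u x)
    (fun x => (hasDerivAt_iter hu r x).mul (hasDerivAt_iter hu r' x))
    (by fun_prop) (by fun_prop)
    (fun x => by rw [(ISP.iter hu r).2 x, (ISP.iter hu r').2 x])
  have h1 : T3 e (s+1) r r' u = torusInt (fun x => u x ^ e *
      (iteratedDeriv (s+1) u x * iteratedDeriv s u x ^ 0 *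
        (iteratedDeriv r u x * iteratedDeriv r' u x))) :=
    torusInt_congr fun x => by ring
  have hA : torusInt (fun x => u x ^ (e-1) *
      (iteratedDeriv 1 u x * iteratedDeriv s u x ^ (0+1) *
        (iteratedDeriv r u x * iteratedDeriv r' u x))) = T4 (e-1) s r r' 1 u :=
    torusInt_congr fun x => by ring
  have hB : torusInt (fun x => u x ^ e * (iteratedDeriv s u x ^ (0+1) *
      (iteratedDeriv (r+1) u x * iteratedDeriv r' u x
      + iteratedDeriv r u x * iteratedDeriv (r'+1) u x))) =
      T3 e s (r+1) r' u + T3 e s r (r'+1) u := by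
    rw [show (fun x => u x ^ e * (iteratedDeriv s u x ^ (0+1) *
      (iteratedDeriv (r+1) u x * iteratedDeriv r' u x
      + iteratedDeriv r u x * iteratedDeriv (r'+1) u x))) = (fun x =>
        (u x ^ e * (iteratedDeriv s u x * (iteratedDeriv (r+1) u x * iteratedDeriv r' u x)))
        + (u x ^ e * (iteratedDeriv s u x * (iteratedDeriv r u x * iteratedDeriv (r'+1) u x))))
      from funext fun x => by ring]
    exact torusInt_add (by fun_prop) (by fun_prop)
  rw [h1, hkey, hA, hB]
  ring

lemma idG (hu : IsSmoothPeriodic u) (e s r r' : ℕ) :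
    T4 e (s+1) s r r' u = -((e:ℝ)/2 * T5 (e-1) s s r r' 1 u)
      - (1/2) * T4 e s s (r+1) r' u - (1/2) * T4 e s s r (r'+1) u := by
  have hic : ∀ n, Continuous (iteratedDeriv n u) := fun n => (ISP.iter hu n).1.continuous
  have hC : Continuous u := hu.1.continuous
  have hkey := key hu e s 1
    (fun x => iteratedDeriv r u x * iteratedDeriv r' u x)
    (fun x => iteratedDeriv (r+1) u x * iteratedDeriv r' u x
      + iteratedDeriv r u x * iteratedDeriv (r'+1) u x)
    (fun x => (hasDerivAt_iter hu r x).mul (hasDerivAt_iter hu r' x))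
    (by fun_prop) (by fun_prop)
    (fun x => by rw [(ISP.iter hu r).2 x, (ISP.iter hu r').2 x])
  have h1 : T4 e (s+1) s r r' u = torusInt (fun x => u x ^ e *
      (iteratedDeriv (s+1) u x * iteratedDeriv s u x ^ 1 *
        (iteratedDeriv r u x * iteratedDeriv r' u x))) :=
    torusInt_congr fun x => by ring
  have hA : torusInt (fun x => u x ^ (e-1) *
      (iteratedDeriv 1 u x * iteratedDeriv s u x ^ (1+1) *
        (iteratedDeriv r u x * iteratedDeriv r' u x))) = T5 (e-1) s s r r' 1 u :=
    torusInt_congr fun x => by ring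
  have hB : torusInt (fun x => u x ^ e * (iteratedDeriv s u x ^ (1+1) *
      (iteratedDeriv (r+1) u x * iteratedDeriv r' u x
      + iteratedDeriv r u x * iteratedDeriv (r'+1) u x))) =
      T4 e s s (r+1) r' u + T4 e s s r (r'+1) u := by
    rw [show (fun x => u x ^ e * (iteratedDeriv s u x ^ (1+1) *
      (iteratedDeriv (r+1) u x * iteratedDeriv r' u x
      + iteratedDeriv r u x * iteratedDeriv (r'+1) u x))) = (fun x =>
        (u x ^ e * (iteratedDeriv s u x * (iteratedDeriv s u x *
          (iteratedDeriv (r+1) u x * iteratedDeriv r' u x))))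
        + (u x ^ e * (iteratedDeriv s u x * (iteratedDeriv s u x *
          (iteratedDeriv r u x * iteratedDeriv (r'+1) u x)))))
      from funext fun x => by ring]
    exact torusInt_add (by fun_prop) (by fun_prop)
  rw [h1, hkey, hA, hB]
  ring

lemma idH (hu : IsSmoothPeriodic u) (e s r : ℕ) :
    T4 e (s+1) s s r u = -((e:ℝ)/3 * T5 (e-1) s s s r 1 u) - (1/3) * T4 e s s s (r+1) u := by
  have hic : ∀ n, Continuous (iteratedDeriv n u) := fun n => (ISP.iter hu n).1.continuous
  have hkey := key hu e s 2 (iteratedDeriv r u) (iteratedDeriv (r+1) u)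
    (fun x => hasDerivAt_iter hu r x) (hic r) (hic (r+1)) (fun x => (ISP.iter hu r).2 x)
  have h1 : T4 e (s+1) s s r u = torusInt (fun x => u x ^ e *
      (iteratedDeriv (s+1) u x * iteratedDeriv s u x ^ 2 * iteratedDeriv r u x)) :=
    torusInt_congr fun x => by ring
  have hA : torusInt (fun x => u x ^ (e-1) *
      (iteratedDeriv 1 u x * iteratedDeriv s u x ^ (2+1) * iteratedDeriv r u x)) =
      T5 (e-1) s s s r 1 u :=
    torusInt_congr fun x => by ring
  have hB : torusInt (fun x => u x ^ e *
      (iteratedDeriv s u x ^ (2+1) * iteratedDeriv (r+1) u x)) = T4 e s s s (r+1) u :=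
    torusInt_congr fun x => by ring
  rw [h1, hkey, hA, hB]
  ring

lemma idI (hu : IsSmoothPeriodic u) (e s : ℕ) :
    T4 e (s+1) s s s u = -((e:ℝ)/4 * T5 (e-1) s s s s 1 u) := by
  have hkey := key hu e s 3 (fun _ => (1:ℝ)) (fun _ => (0:ℝ))
    (fun x => hasDerivAt_const x 1) continuous_const continuous_const (fun _ => rfl)
  have h1 : T4 e (s+1) s s s u = torusInt (fun x => u x ^ e *
      (iteratedDeriv (s+1) u x * iteratedDeriv s u x ^ 3 * 1)) :=
    torusInt_congr fun x => by ring
  have hA : torusInt (fun x => u x ^ (e-1) *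
      (iteratedDeriv 1 u x * iteratedDeriv s u x ^ (3+1) * 1)) = T5 (e-1) s s s s 1 u :=
    torusInt_congr fun x => by ring
  have hB : torusInt (fun x => u x ^ e * (iteratedDeriv s u x ^ (3+1) * 0)) = 0 := by
    rw [show (fun x => u x ^ e * (iteratedDeriv s u x ^ (3+1) * 0)) = (fun _ => (0:ℝ)) from
      funext fun x => by ring]
    exact torusInt_zero
  rw [h1, hkey, hA, hB]
  ring

lemma idJ (hu : IsSmoothPeriodic u) (e s r r' r'' : ℕ) :
    T4 e (s+1) r r' r'' u =
      -((e:ℝ) * T5 (e-1) s r r' r'' 1 u) - T4 e s (r+1) r' r'' u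
        - T4 e s r (r'+1) r'' u - T4 e s r r' (r''+1) u := by
  have hic : ∀ n, Continuous (iteratedDeriv n u) := fun n => (ISP.iter hu n).1.continuous
  have hC : Continuous u := hu.1.continuous
  have hkey := key hu e s 0
    (fun x => iteratedDeriv r u x * (iteratedDeriv r' u x * iteratedDeriv r'' u x))
    (fun x => iteratedDeriv (r+1) u x * (iteratedDeriv r' u x * iteratedDeriv r'' u x)
      + iteratedDeriv r u x * (iteratedDeriv (r'+1) u x * iteratedDeriv r'' u x
      + iteratedDeriv r' u x * iteratedDeriv (r''+1) u x))
    (fun x => ((hasDerivAt_iter hu r x).mul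
      ((hasDerivAt_iter hu r' x).mul (hasDerivAt_iter hu r'' x))))
    (by fun_prop) (by fun_prop)
    (fun x => by
      simp only [(ISP.iter hu r).2 x, (ISP.iter hu r').2 x, (ISP.iter hu r'').2 x])
  have h1 : T4 e (s+1) r r' r'' u = torusInt (fun x => u x ^ e *
      (iteratedDeriv (s+1) u x * iteratedDeriv s u x ^ 0 *
        (iteratedDeriv r u x * (iteratedDeriv r' u x * iteratedDeriv r'' u x)))) :=
    torusInt_congr fun x => by ring
  have hA : torusInt (fun x => u x ^ (e-1) * (iteratedDeriv 1 u x * iteratedDeriv s u x ^ (0+1) *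
      (iteratedDeriv r u x * (iteratedDeriv r' u x * iteratedDeriv r'' u x)))) =
      T5 (e-1) s r r' r'' 1 u :=
    torusInt_congr fun x => by ring
  have hB : torusInt (fun x => u x ^ e * (iteratedDeriv s u x ^ (0+1) *
      (iteratedDeriv (r+1) u x * (iteratedDeriv r' u x * iteratedDeriv r'' u x)
      + iteratedDeriv r u x * (iteratedDeriv (r'+1) u x * iteratedDeriv r'' u x
      + iteratedDeriv r' u x * iteratedDeriv (r''+1) u x)))) =
      T4 e s (r+1) r' r'' u + T4 e s r (r'+1) r'' u + T4 e s r r' (r''+1) u := by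
    rw [show (fun x => u x ^ e * (iteratedDeriv s u x ^ (0+1) *
      (iteratedDeriv (r+1) u x * (iteratedDeriv r' u x * iteratedDeriv r'' u x)
      + iteratedDeriv r u x * (iteratedDeriv (r'+1) u x * iteratedDeriv r'' u x
      + iteratedDeriv r' u x * iteratedDeriv (r''+1) u x)))) = (fun x =>
        (u x ^ e * (iteratedDeriv s u x * (iteratedDeriv (r+1) u x *
          (iteratedDeriv r' u x * iteratedDeriv r'' u x))))
        + (u x ^ e * (iteratedDeriv s u x * (iteratedDeriv r u x *
          (iteratedDeriv (r'+1) u x * iteratedDeriv r'' u x))))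
        + (u x ^ e * (iteratedDeriv s u x * (iteratedDeriv r u x *
          (iteratedDeriv r' u x * iteratedDeriv (r''+1) u x))))) from funext fun x => by ring]
    exact torusInt_add3 (by fun_prop) (by fun_prop) (by fun_prop)
  rw [h1, hkey, hA, hB]
  push_cast
  ring

end identities

/-! ### The inductive reductions -/

lemma goodT4 (hk : 1 < k) (hp : 4 ≤ p) : ∀ a b c d : ℕ, 1 ≤ d → d ≤ c → c ≤ b → b ≤ a →
    a + b + c + d = 2*k+1 → Good k p hp (T4 (p-2) a b c d) := by
  intro a
  induction a using Nat.strong_induction_on with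
  | _ a IH =>
  intro b c d hd hdc hcb hba hsum
  rcases Nat.lt_or_ge a (b+1) with hlt | hge
  · -- a = b : terminal I-form
    obtain rfl : b = a := by omega
    have hcd : d < c := by omega
    exact goodI4 hk hp (by omega) (by omega) hcd (by omega)
  rcases Nat.lt_or_ge a (b+2) with hlt2 | hge2
  · -- a = b+1
    obtain rfl : a = b + 1 := by omega
    rcases Nat.lt_or_ge c b with hcb' | hcb'' 
    · -- c < b : use idG
      have hS1 : Good k p hp (T5 (p-3) b b c d 1) :=
        goodJ hk hp le_rfl hd hdc (by omega) le_rfl (by omega)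
      have hS2 : Good k p hp (T4 (p-2) b b (c+1) d) :=
        IH b (by omega) b (c+1) d (by omega) (by omega) (by omega) le_rfl (by omega)
      have hS3 : Good k p hp (T4 (p-2) b b c (d+1)) := by
        rcases Nat.lt_or_ge d c with hdc' | hdc''
        · exact IH b (by omega) b c (d+1) (by omega) (by omega) (by omega) le_rfl (by omega)
        · obtain rfl : c = d := by omega
          exact (IH b (by omega) b (c+1) c (by omega) (by omega) (by omega) le_rfl
            (by omega)).congr (fun u hu => torusInt_congr fun x => by ring)
      refine Good.comb3 (-(((p:ℝ)-2)/2)) (-(1/2)) (-(1/2)) hS1 hS2 hS3 (fun u hu => ?_)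
      rw [idG hu (p-2) b c d, show p-2-1 = p-3 from by omega,
        Nat.cast_sub (show 2 ≤ p from by omega)]
      push_cast
      ring
    · -- c = b
      obtain rfl : b = c := by omega
      rcases Nat.lt_or_ge d b with hdb | hdb'
      · -- d < b : use idH
        have hS1 : Good k p hp (T5 (p-3) b b b d 1) :=
          goodJ hk hp le_rfl hd (by omega) le_rfl le_rfl (by omega)
        have hS2 : Good k p hp (T4 (p-2) b b b (d+1)) :=
          IH b (by omega) b b (d+1) (by omega) (by omega) le_rfl le_rfl (by omega)
        refine Good.comb2 (-(((p:ℝ)-2)/3)) (-(1/3)) hS1 hS2 (fun u hu => ?_)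
        rw [idH hu (p-2) b d, show p-2-1 = p-3 from by omega,
          Nat.cast_sub (show 2 ≤ p from by omega)]
        push_cast
        ring
      · -- d = b : use idI
        obtain rfl : b = d := by omega
        have hS1 : Good k p hp (T5 (p-3) b b b b 1) :=
          goodJ hk hp le_rfl (by omega) le_rfl le_rfl le_rfl (by omega)
        refine (hS1.smul (-(((p:ℝ)-2)/4))).congr (fun u hu => ?_)
        rw [idI hu (p-2) b, show p-2-1 = p-3 from by omega,
          Nat.cast_sub (show 2 ≤ p from by omega)]
        push_cast
        ring
  · -- a ≥ b+2 : use idJ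
    obtain ⟨a', rfl⟩ : ∃ a', a = a' + 1 := ⟨a-1, by omega⟩
    have hba' : b + 1 ≤ a' := by omega
    have hS1 : Good k p hp (T5 (p-3) a' b c d 1) :=
      goodJ hk hp le_rfl hd hdc hcb (by omega) (by omega)
    have hS2 : Good k p hp (T4 (p-2) a' (b+1) c d) :=
      IH a' (by omega) (b+1) c d hd hdc (by omega) (by omega) (by omega)
    have hS3 : Good k p hp (T4 (p-2) a' b (c+1) d) := by
      rcases Nat.lt_or_ge c b with h | h
      · exact IH a' (by omega) b (c+1) d (by omega) (by omega) (by omega) (by omega) (by omega)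
      · obtain rfl : b = c := by omega
        exact (IH a' (by omega) (b+1) b d hd (by omega) (by omega) (by omega)
          (by omega)).congr (fun u hu => torusInt_congr fun x => by ring)
    have hS4 : Good k p hp (T4 (p-2) a' b c (d+1)) := by
      rcases Nat.lt_or_ge d c with h | h
      · exact IH a' (by omega) b c (d+1) (by omega) (by omega) hcb (by omega) (by omega)
      · obtain rfl : c = d := by omega
        rcases Nat.lt_or_ge c b with h2 | h2
        · exact (IH a' (by omega) b (c+1) c (by omega) (by omega) (by omega) (by omega)
            (by omega)).congr (fun u hu => torusInt_congr fun x => by ring)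
        · obtain rfl : b = c := by omega
          exact (IH a' (by omega) (b+1) b b (by omega) le_rfl (by omega) (by omega)
            (by omega)).congr (fun u hu => torusInt_congr fun x => by ring)
    refine Good.comb4 (-((p:ℝ)-2)) (-1) (-1) (-1) hS1 hS2 hS3 hS4 (fun u hu => ?_)
    rw [idJ hu (p-2) a' b c d, show p-2-1 = p-3 from by omega,
      Nat.cast_sub (show 2 ≤ p from by omega)]
    push_cast
    ring

lemma goodT3 (hk : 1 < k) (hp : 4 ≤ p) : ∀ a b c : ℕ, 1 ≤ c → c ≤ b → b ≤ a →
    a + b + c = 2*k+1 → Good k p hp (T3 (p-1) a b c) := by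
  intro a
  induction a using Nat.strong_induction_on with
  | _ a IH =>
  intro b c hc hcb hba hsum
  rcases Nat.lt_or_ge a (b+1) with hlt | hge
  · obtain rfl : b = a := by omega
    exact goodI3 hk hp hc hcb (by omega)
  rcases Nat.lt_or_ge a (b+2) with hlt2 | hge2
  · obtain rfl : a = b + 1 := by omega
    rcases Nat.lt_or_ge c b with h | h
    · -- c < b : use idD
      have hS1 : Good k p hp (T4 (p-2) b b c 1) :=
        goodT4 hk hp b b c 1 le_rfl hc (by omega) le_rfl (by omega)
      have hS2 : Good k p hp (T3 (p-1) b b (c+1)) :=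
        IH b (by omega) b (c+1) (by omega) (by omega) le_rfl (by omega)
      refine Good.comb2 (-(((p:ℝ)-1)/2)) (-(1/2)) hS1 hS2 (fun u hu => ?_)
      rw [idD hu (p-1) b c, show p-1-1 = p-2 from by omega,
        Nat.cast_sub (show 1 ≤ p from by omega)]
      push_cast
      ring
    · -- c = b : use idE
      obtain rfl : b = c := by omega
      have hS1 : Good k p hp (T4 (p-2) b b b 1) :=
        goodT4 hk hp b b b 1 le_rfl (by omega) le_rfl le_rfl (by omega)
      refine (hS1.smul (-(((p:ℝ)-1)/3))).congr (fun u hu => ?_)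
      rw [idE hu (p-1) b, show p-1-1 = p-2 from by omega,
        Nat.cast_sub (show 1 ≤ p from by omega)]
      push_cast
      ring
  · -- a ≥ b+2 : use idF
    obtain ⟨a', rfl⟩ : ∃ a', a = a' + 1 := ⟨a-1, by omega⟩
    have hS1 : Good k p hp (T4 (p-2) a' b c 1) :=
      goodT4 hk hp a' b c 1 le_rfl hc hcb (by omega) (by omega)
    have hS2 : Good k p hp (T3 (p-1) a' (b+1) c) :=
      IH a' (by omega) (b+1) c hc (by omega) (by omega) (by omega)
    have hS3 : Good k p hp (T3 (p-1) a' b (c+1)) := by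
      rcases Nat.lt_or_ge c b with h | h
      · exact IH a' (by omega) b (c+1) (by omega) (by omega) (by omega) (by omega)
      · obtain rfl : b = c := by omega
        exact (IH a' (by omega) (b+1) b (by omega) (by omega) (by omega) (by omega)).congr
          (fun u hu => torusInt_congr fun x => by ring)
    refine Good.comb3 (-((p:ℝ)-1)) (-1) (-1) hS1 hS2 hS3 (fun u hu => ?_)
    rw [idF hu (p-1) a' b c, show p-1-1 = p-2 from by omega,
      Nat.cast_sub (show 1 ≤ p from by omega)]
    push_cast
    ring

lemma goodT2 (hk : 1 < k) (hp : 4 ≤ p) : ∀ a b : ℕ, 1 ≤ b → b < a → a + b = 2*k+1 →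
    Good k p hp (T2 p a b) := by
  intro a
  induction a using Nat.strong_induction_on with
  | _ a IH =>
  intro b hb hba hsum
  rcases Nat.lt_or_ge a (b+2) with hlt | hge
  · obtain rfl : a = b + 1 := by omega
    have hS1 : Good k p hp (T3 (p-1) b b 1) :=
      goodT3 hk hp b b 1 le_rfl hb le_rfl (by omega)
    refine (hS1.smul (-((p:ℝ)/2))).congr (fun u hu => ?_)
    rw [idB hu p b]
    ring
  · obtain ⟨a', rfl⟩ : ∃ a', a = a' + 1 := ⟨a-1, by omega⟩
    have hS1 : Good k p hp (T3 (p-1) a' b 1) :=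
      goodT3 hk hp a' b 1 le_rfl hb (by omega) (by omega)
    have hS2 : Good k p hp (T2 p a' (b+1)) :=
      IH a' (by omega) (b+1) (by omega) (by omega) (by omega)
    refine Good.comb2 (-(p:ℝ)) (-1) hS1 hS2 (fun u hu => ?_)
    rw [idC hu p a' b]
    ring

lemma goodT1 (hk : 1 < k) (hp : 4 ≤ p) : Good k p hp (T1 (p+1) (2*k+1)) := by
  have hS1 : Good k p hp (T2 p (2*k) 1) := goodT2 hk hp (2*k) 1 le_rfl (by omega) (by omega)
  refine (hS1.smul (-((p:ℝ)+1))).congr (fun u hu => ?_)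
  have h := idA hu (p+1) (2*k)
  rw [h, show p+1-1 = p from by omega]
  push_cast
  ring

/-! ### Repeated integration by parts for the left-hand side -/

lemma shift {u : ℝ → ℝ} (hu : IsSmoothPeriodic u) (p : ℕ) :
    ∀ j : ℕ, j ≤ k+1 → torusInt (fun x => iteratedDeriv k u x *
        iteratedDeriv (k+1) (fun y => u y ^ (p+1)) x) =
      (-1:ℝ)^j * torusInt (fun x => iteratedDeriv (k+j) u x *
        iteratedDeriv (k+1-j) (fun y => u y ^ (p+1)) x) := by
  have hw : IsSmoothPeriodic (fun y => u y ^ (p+1)) :=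
    ⟨hu.1.pow (p+1), fun x => by simp [hu.2 x]⟩
  intro j
  induction j with
  | zero => intro _; simp
  | succ j ihj =>
    intro hj
    rw [ihj (by omega)]
    have hkj : k+1-j = (k-j)+1 := by omega
    have hibp := ibp (hasDerivAt_iter hw (k-j)) (hasDerivAt_iter hu (k+j))
      (ISP.iter hw (k-j)).1.continuous (ISP.iter hu (k+j)).1.continuous
      (ISP.iter hw ((k-j)+1)).1.continuous (ISP.iter hu ((k+j)+1)).1.continuous
      (ISP.iter hw (k-j)).2 (ISP.iter hu (k+j)).2
    have e1 : torusInt (fun x => iteratedDeriv (k+j) u x *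
        iteratedDeriv (k+1-j) (fun y => u y ^ (p+1)) x) =
        torusInt (fun x => iteratedDeriv ((k-j)+1) (fun y => u y ^ (p+1)) x *
          iteratedDeriv (k+j) u x) := by
      rw [hkj]
      exact torusInt_congr fun x => by ring
    have e2 : torusInt (fun x => iteratedDeriv (k-j) (fun y => u y ^ (p+1)) x *
        iteratedDeriv ((k+j)+1) u x) =
        torusInt (fun x => iteratedDeriv (k+(j+1)) u x *
          iteratedDeriv (k+1-(j+1)) (fun y => u y ^ (p+1)) x) := by
      have h1 : k+1-(j+1) = k-j := by omega
      have h2 : k+(j+1) = (k+j)+1 := by omega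
      rw [h1, h2]
      exact torusInt_congr fun x => by ring
    rw [e1, hibp, e2]
    ring

end QE

/-- Theorem: there exist coefficients `δ` (on `A^k`) and `γ` (on `D^k`) such that for every
smooth `2π`-periodic `u`,
`∫ (∂ₓᵏu)·(∂ₓ^{k+1}(u^{p+1})) = Σ_{A^k} δ ∫ I_{j₀+1,j₁+1,j₂}(u) + Σ_{D^k} γ ∫ J(u)`. -/
theorem quadratic_exchange (k p : ℕ) (hk : 1 < k) (hp : 4 ≤ p) (hpeven : Even p) :
    ∃ (δ : ℕ × ℕ × ℕ → ℝ) (γ : (Fin (p + 2) → ℕ) → ℝ),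
      ∀ u : ℝ → ℝ, IsSmoothPeriodic u →
        torusInt (fun x => iteratedDeriv k u x *
            iteratedDeriv (k + 1) (fun y => u y ^ (p + 1)) x) =
          (∑ j ∈ Aset k, δ j * torusInt (Idens p (j.1 + 1) (j.2.1 + 1) j.2.2 u)) +
            ∑ j ∈ Dset p k hp, γ j * torusInt (Jdens j u) := by
  have hG : QE.Good k p hp (fun u => torusInt (fun x => iteratedDeriv k u x *
      iteratedDeriv (k + 1) (fun y => u y ^ (p + 1)) x)) := by
    refine ((QE.goodT1 hk hp).smul ((-1:ℝ)^(k+1))).congr (fun u hu => ?_)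
    rw [QE.shift hu p (k+1) le_rfl]
    congr 1
    have h1 : k + (k+1) = 2*k+1 := by omega
    have h2 : k+1-(k+1) = 0 := by omega
    rw [h1, h2]
    refine QE.torusInt_congr fun x => ?_
    simp only [iteratedDeriv_zero]
    ring
  obtain ⟨δ, γ, H⟩ := hG
  exact ⟨δ, γ, H⟩
end

section
/- Let s ≥ 1 be a real number. There exists a constant C > 0 depending only on s such that for all integers n, n₁ with n ≠ 0, n₁ ≠ 0 and n₁ ≠ n: (1+n²)^{s/2} ≤ C·|n₁|^{1/2}·|n−n₁|^{1/2}·|n|^{1/2}·((1+n₁²)^{(s−1)/2} + (1+(n−n₁)²)^{(s−1)/2}). -/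
open Real

/-- Theorem (weight distribution inequality): for real `s ≥ 1` there is a constant `C > 0`,
depending only on `s`, such that for all nonzero integers `n, n₁` with `n₁ ≠ n`:
`⟨n⟩^s ≤ C |n₁|^{1/2} |n−n₁|^{1/2} |n|^{1/2} (⟨n₁⟩^{s−1} + ⟨n−n₁⟩^{s−1})`,
written with `⟨n⟩ = (1+n²)^{1/2}`, i.e. `⟨n⟩^s = (1+n²)^{s/2}`. -/
theorem weight_distribution (s : ℝ) (hs : 1 ≤ s) :
    ∃ C > (0:ℝ), ∀ n n₁ : ℤ, n ≠ 0 → n₁ ≠ 0 → n₁ ≠ n →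
      (1 + (n:ℝ) ^ 2) ^ (s / 2) ≤
        C * |(n₁:ℝ)| ^ ((1:ℝ)/2) * |(n:ℝ) - (n₁:ℝ)| ^ ((1:ℝ)/2) * |(n:ℝ)| ^ ((1:ℝ)/2) *
          ((1 + (n₁:ℝ) ^ 2) ^ ((s - 1) / 2) +
            (1 + ((n:ℝ) - (n₁:ℝ)) ^ 2) ^ ((s - 1) / 2)) := by
  refine ⟨(2:ℝ) ^ (s - 1) * 2, by positivity, ?_⟩
  intro n n₁ hn hn₁ hne
  set a : ℝ := |(n₁:ℝ)| with ha_def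
  set b : ℝ := |(n:ℝ) - (n₁:ℝ)| with hb_def
  set c : ℝ := |(n:ℝ)| with hc_def
  have ha : (1:ℝ) ≤ a := by
    have h : (1:ℤ) ≤ |n₁| := Int.one_le_abs hn₁
    have := (Int.cast_le (R := ℝ)).mpr h
    push_cast at this
    simpa [ha_def] using this
  have hb : (1:ℝ) ≤ b := by
    have h : n - n₁ ≠ 0 := sub_ne_zero.mpr (Ne.symm hne)
    have : (1:ℤ) ≤ |n - n₁| := Int.one_le_abs h
    have := (Int.cast_le (R := ℝ)).mpr this
    push_cast at this
    simpa [hb_def] using this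
  have hc : (1:ℝ) ≤ c := by
    have h : (1:ℤ) ≤ |n| := Int.one_le_abs hn
    have := (Int.cast_le (R := ℝ)).mpr h
    push_cast at this
    simpa [hc_def] using this
  have hab : c ≤ a + b := by
    have := abs_add_le (n₁:ℝ) ((n:ℝ) - (n₁:ℝ))
    simpa [ha_def, hb_def, hc_def] using this
  have hnsq : (n:ℝ)^2 = c^2 := (sq_abs _).symm
  have hn₁sq : (n₁:ℝ)^2 = a^2 := (sq_abs _).symm
  have hbsq : ((n:ℝ) - (n₁:ℝ))^2 = b^2 := (sq_abs _).symm
  -- key pointwise bounds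
  have key1 : 1 + (n:ℝ)^2 ≤ 4 * (a * b * c) := by
    rw [hnsq]
    nlinarith [mul_nonneg (sub_nonneg.mpr ha) (sub_nonneg.mpr hb),
      mul_le_mul_of_nonneg_left hab (by linarith : (0:ℝ) ≤ c)]
  set M : ℝ := max (1 + (n₁:ℝ)^2) (1 + ((n:ℝ) - (n₁:ℝ))^2) with hM_def
  have hMpos : (0:ℝ) < M := lt_max_of_lt_left (by positivity)
  have key2 : 1 + (n:ℝ)^2 ≤ 4 * M := by
    rcases le_total a b with h | h
    · have : M = max (1 + a^2) (1 + b^2) := by rw [hM_def, hn₁sq, hbsq]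
      rw [this, max_eq_right (by nlinarith)]
      rw [hnsq]; nlinarith
    · have : M = max (1 + a^2) (1 + b^2) := by rw [hM_def, hn₁sq, hbsq]
      rw [this, max_eq_left (by nlinarith)]
      rw [hnsq]; nlinarith
  have hpos : (0:ℝ) < 1 + (n:ℝ)^2 := by positivity
  have hs1 : (0:ℝ) ≤ (s - 1) / 2 := by linarith
  -- 2^(2:ℝ) = 4
  have h224 : (2:ℝ) ^ (2:ℝ) = 4 := by
    rw [show (2:ℝ) = ((2:ℕ):ℝ) by norm_num, Real.rpow_natCast]; norm_num
  have h4half : (4:ℝ) ^ ((1:ℝ)/2) = 2 := by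
    rw [← h224, ← Real.rpow_mul (by norm_num)]; norm_num
  have h4s : (4:ℝ) ^ ((s-1)/2) = 2 ^ (s - 1) := by
    rw [← h224, ← Real.rpow_mul (by norm_num)]; ring_nf
  -- split the exponent
  have hsplit : (1 + (n:ℝ)^2) ^ (s/2) =
      (1 + (n:ℝ)^2) ^ ((s-1)/2) * (1 + (n:ℝ)^2) ^ ((1:ℝ)/2) := by
    rw [← Real.rpow_add hpos]; ring_nf
  have step1 : (1 + (n:ℝ)^2) ^ ((s-1)/2) ≤ 2 ^ (s-1) *
      ((1 + (n₁:ℝ)^2) ^ ((s-1)/2) + (1 + ((n:ℝ) - (n₁:ℝ))^2) ^ ((s-1)/2)) := by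
    have h1 : (1 + (n:ℝ)^2) ^ ((s-1)/2) ≤ (4 * M) ^ ((s-1)/2) :=
      Real.rpow_le_rpow (le_of_lt hpos) key2 hs1
    have h2 : (4 * M) ^ ((s-1)/2) = 2 ^ (s-1) * M ^ ((s-1)/2) := by
      rw [Real.mul_rpow (by norm_num) hMpos.le, h4s]
    have h3 : M ^ ((s-1)/2) ≤
        (1 + (n₁:ℝ)^2) ^ ((s-1)/2) + (1 + ((n:ℝ) - (n₁:ℝ))^2) ^ ((s-1)/2) := by
      rcases max_cases (1 + (n₁:ℝ)^2) (1 + ((n:ℝ) - (n₁:ℝ))^2) with ⟨hM, _⟩ | ⟨hM, _⟩ <;>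
        rw [hM_def, hM]
      · exact le_add_of_nonneg_right (by positivity)
      · exact le_add_of_nonneg_left (by positivity)
    calc (1 + (n:ℝ)^2) ^ ((s-1)/2) ≤ 2 ^ (s-1) * M ^ ((s-1)/2) := by rw [← h2]; exact h1
      _ ≤ _ := by
          have h2pos : (0:ℝ) ≤ (2:ℝ) ^ (s-1) := by positivity
          exact mul_le_mul_of_nonneg_left h3 h2pos
  have step2 : (1 + (n:ℝ)^2) ^ ((1:ℝ)/2) ≤
      2 * (a ^ ((1:ℝ)/2) * b ^ ((1:ℝ)/2) * c ^ ((1:ℝ)/2)) := by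
    have h1 : (1 + (n:ℝ)^2) ^ ((1:ℝ)/2) ≤ (4 * (a * b * c)) ^ ((1:ℝ)/2) :=
      Real.rpow_le_rpow (le_of_lt hpos) key1 (by norm_num)
    have ha0 : (0:ℝ) ≤ a := by linarith
    have hb0 : (0:ℝ) ≤ b := by linarith
    have hc0 : (0:ℝ) ≤ c := by linarith
    have h2 : (4 * (a * b * c)) ^ ((1:ℝ)/2) =
        2 * (a ^ ((1:ℝ)/2) * b ^ ((1:ℝ)/2) * c ^ ((1:ℝ)/2)) := by
      rw [Real.mul_rpow (by norm_num) (by positivity), h4half,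
        Real.mul_rpow (by positivity) hc0, Real.mul_rpow ha0 hb0, mul_assoc]
    rw [h2] at h1; exact h1
  calc (1 + (n:ℝ)^2) ^ (s/2)
      = (1 + (n:ℝ)^2) ^ ((s-1)/2) * (1 + (n:ℝ)^2) ^ ((1:ℝ)/2) := hsplit
    _ ≤ (2 ^ (s-1) * ((1 + (n₁:ℝ)^2) ^ ((s-1)/2) + (1 + ((n:ℝ) - (n₁:ℝ))^2) ^ ((s-1)/2))) *
        (2 * (a ^ ((1:ℝ)/2) * b ^ ((1:ℝ)/2) * c ^ ((1:ℝ)/2))) := by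
        apply mul_le_mul step1 step2 (by positivity) (by positivity)
    _ = (2:ℝ) ^ (s - 1) * 2 * a ^ ((1:ℝ)/2) * b ^ ((1:ℝ)/2) * c ^ ((1:ℝ)/2) *
          ((1 + (n₁:ℝ) ^ 2) ^ ((s - 1) / 2) + (1 + ((n:ℝ) - (n₁:ℝ)) ^ 2) ^ ((s - 1) / 2)) := by
        ring
end
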